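/- arXiv:1406.5516 — 4 statements merged into one kernel-verified Lean document; each statement's English description precedes it below -/
import Mathlib

section
/- Representation Formula: let U ⊆ ℍ be an axially symmetric s-domain and let f : U → ℍ be slice regular. Let J be a unit imaginary quaternion (J² = −1) and let x, y ∈ ℝ be such that x + Jy and x − Jy belong to U ∩ ℂ_J. Then for every unit imaginary quaternion I with x + Iy ∈ U one has f(x+Iy) = (1/2)[f(x+Jy) + f(x−Jy)] + I·(1/2)·J·[f(x−Jy) − f(x+Jy)], equivalently f(x+Iy) = (1/2)(1−IJ) f(x+Jy) + (1/2)(1+IJ) f(x−Jy). -/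
noncomputable section

/-- The complex plane `ℂ_I = {x + I y : x, y ∈ ℝ}` inside the quaternions, for a
unit imaginary quaternion `I`. -/
def slicePlane (I : Quaternion ℝ) : Set (Quaternion ℝ) :=
  {q | ∃ x y : ℝ, q = (x : Quaternion ℝ) + y • I}

/-- A set `U ⊆ ℍ` is axially symmetric if `x + I y ∈ U` implies `x + J y ∈ U`
for all unit imaginary quaternions `J`. -/
def AxiallySymmetric (U : Set (Quaternion ℝ)) : Prop :=
  ∀ (x y : ℝ) (I J : Quaternion ℝ), I ^ 2 = -1 → J ^ 2 = -1 →
    ((x : Quaternion ℝ) + y • I) ∈ U → ((x : Quaternion ℝ) + y • J) ∈ U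

/-- `f` is slice regular on `U`: it is real differentiable on `U` and for every unit
imaginary quaternion `I` its restriction to `U ∩ ℂ_I` satisfies
`(1/2)(∂/∂x + I ∂/∂y) f(x + I y) = 0`. -/
def SliceRegularOn (f : Quaternion ℝ → Quaternion ℝ) (U : Set (Quaternion ℝ)) : Prop :=
  DifferentiableOn ℝ f U ∧
  ∀ (I : Quaternion ℝ), I ^ 2 = -1 → ∀ x y : ℝ, ((x : Quaternion ℝ) + y • I) ∈ U →
    fderiv ℝ (fun p : ℝ × ℝ => f ((p.1 : Quaternion ℝ) + p.2 • I)) (x, y) (1, 0)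
      + I * fderiv ℝ (fun p : ℝ × ℝ => f ((p.1 : Quaternion ℝ) + p.2 • I)) (x, y) (0, 1) = 0

/-- The slice derivative of `f` at `q`, i.e. `(∂/∂x) f`. -/
def sliceDeriv (f : Quaternion ℝ → Quaternion ℝ) (q : Quaternion ℝ) : Quaternion ℝ :=
  fderiv ℝ f q 1

/-- A quaternion is a (strictly) positive real number. -/
def IsPosReal (q : Quaternion ℝ) : Prop := ∃ r : ℝ, 0 < r ∧ q = (r : Quaternion ℝ)

/-- `f ∈ 𝒩(U)`: `f` is slice regular on `U` and preserves every slice `ℂ_I`. -/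
def QIntrinsicOn (f : Quaternion ℝ → Quaternion ℝ) (U : Set (Quaternion ℝ)) : Prop :=
  SliceRegularOn f U ∧
  ∀ (I : Quaternion ℝ), I ^ 2 = -1 → ∀ q ∈ U ∩ slicePlane I, f q ∈ slicePlane I

/-- The class `𝔯(ℍ)` of axially symmetric open sets whose intersection with every
slice plane `ℂ_I` is simply connected. -/
def MemFrakR (Ω : Set (Quaternion ℝ)) : Prop :=
  IsOpen Ω ∧ AxiallySymmetric Ω ∧
  ∀ I : Quaternion ℝ, I ^ 2 = -1 → SimplyConnectedSpace ↥(Ω ∩ slicePlane I)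

/-- `S` is a Jordan region in the plane `ℂ_I`: a bounded subset of `ℂ_I`, open in `ℂ_I`,
whose boundary (inside `ℂ_I`) is a Jordan curve. -/
def IsJordanRegionIn (I : Quaternion ℝ) (S : Set (Quaternion ℝ)) : Prop :=
  S ⊆ slicePlane I ∧ Bornology.IsBounded S ∧
  IsOpen (Subtype.val ⁻¹' S : Set ↥(slicePlane I)) ∧
  ∃ γ : Circle → ↥(slicePlane I), Continuous γ ∧ Function.Injective γ ∧
    Set.range γ = frontier (Subtype.val ⁻¹' S : Set ↥(slicePlane I))

/-- The axially symmetric completion `⋃_{x+Jy ∈ Ω, I ∈ 𝕊} {x + I y}` of a subset `Ω`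
of the slice plane `ℂ_J`. -/
def axSymmCompletion (J : Quaternion ℝ) (Ω : Set (Quaternion ℝ)) : Set (Quaternion ℝ) :=
  {q | ∃ x y : ℝ, ∃ I : Quaternion ℝ, I ^ 2 = -1 ∧
    ((x : Quaternion ℝ) + y • J) ∈ Ω ∧ q = (x : Quaternion ℝ) + y • I}

/-- The first modulus of continuity `ω₁(f; δ)` of `f` on the set `K`. -/
def omega1 (f : Quaternion ℝ → Quaternion ℝ) (K : Set (Quaternion ℝ)) (δ : ℝ) : ℝ :=
  sSup {r : ℝ | ∃ u ∈ K, ∃ v ∈ K, ‖u - v‖ ≤ δ ∧ r = ‖f u - f v‖}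

/-!
Identify `ℂ` with each slice through `z ↦ re z + (im z) K` and write `f_K(z) = f(re z + (im z) K)`,
so that `f(x - yJ) = f_{-J}(x + iy)`. Axial symmetry makes `D = {z | re z + (im z) I ∈ U}`
independent of `I` and invariant under conjugation. With `c₁ = (1 - IJ)/2` and `c₂ = (1 + IJ)/2`
one has `I c₁ = c₁ J` and `I c₂ = c₂ (-J)`, so `g = f_I - c₁ f_J - c₂ f_{-J}` satisfies the
Cauchy–Riemann equation of `ℂ_I` on `D`, i.e. is holomorphic for the `ℂ`-structure on `ℍ` given
by left multiplication by `ℂ_I`. Since `c₁ + c₂ = 1`, `g` vanishes on the real points of `D`;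
these exist because `D` is preconnected and conjugation invariant, so the identity principle
gives `g = 0` on `D`.
-/

open scoped Quaternion Topology

namespace Quaternion

theorem normSq_eq_one_of_sq_eq_neg_one {I : ℍ} (hI : I ^ 2 = -1) : normSq I = 1 := by
  have h : normSq I ^ 2 = 1 := by rw [← map_pow, hI, normSq_neg, map_one]
  nlinarith [normSq_nonneg (a := I)]

theorem re_eq_zero_of_sq_eq_neg_one {I : ℍ} (hI : I ^ 2 = -1) : I.re = 0 := by
  rw [← sq_eq_neg_normSq, normSq_eq_one_of_sq_eq_neg_one hI]
  exact_mod_cast hI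

end Quaternion

theorem mul_one_sub_mul_eq_one_sub_mul_mul {R : Type*} [Ring R] {i j : R} (hi : i * i = -1)
    (hj : j * j = -1) : i * (1 - i * j) = (1 - i * j) * j := by
  rw [mul_sub, sub_mul, ← mul_assoc, hi, mul_assoc, hj]
  noncomm_ring

theorem mul_one_add_mul_eq_one_add_mul_mul_neg {R : Type*} [Ring R] {i j : R} (hi : i * i = -1)
    (hj : j * j = -1) : i * (1 + i * j) = (1 + i * j) * -j := by
  rw [mul_add, add_mul, ← mul_assoc, hi, mul_neg, mul_neg, mul_assoc, hj]
  noncomm_ring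

def sliceEmbedding (I : ℍ) : ℂ →L[ℝ] ℍ :=
  Complex.reCLM.smulRight 1 + Complex.imCLM.smulRight I

section sliceEmbedding

variable {I : ℍ}

@[simp]
theorem sliceEmbedding_apply (z : ℂ) : sliceEmbedding I z = (z.re : ℍ) + z.im • I := by
  simp [sliceEmbedding, Algebra.smul_def, Quaternion.algebraMap_def]

theorem sliceEmbedding_ofReal (r : ℝ) : sliceEmbedding I r = r := by simp

theorem sliceEmbedding_neg (z : ℂ) :
    sliceEmbedding (-I) z = sliceEmbedding I (starRingEnd ℂ z) := by
  simp

theorem range_sliceEmbedding : Set.range (sliceEmbedding I) = slicePlane I := by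
  ext q
  simp only [Set.mem_range, sliceEmbedding_apply, slicePlane, Set.mem_ofPred_eq]
  exact ⟨fun ⟨z, hz⟩ => ⟨z.re, z.im, hz.symm⟩, fun ⟨x, y, hq⟩ => ⟨⟨x, y⟩, hq.symm⟩⟩

theorem norm_sliceEmbedding (hI : I ^ 2 = -1) (z : ℂ) : ‖sliceEmbedding I z‖ = ‖z‖ := by
  have h : Quaternion.normSq (sliceEmbedding I z) = Complex.normSq z := by
    rw [sliceEmbedding_apply, Quaternion.normSq_add, Quaternion.normSq_coe,
      Quaternion.normSq_smul, Quaternion.normSq_eq_one_of_sq_eq_neg_one hI, Complex.normSq_apply]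
    simp [Quaternion.re_eq_zero_of_sq_eq_neg_one hI]
    ring
  rw [Quaternion.normSq_eq_norm_mul_self, Complex.normSq_eq_norm_sq] at h
  nlinarith [norm_nonneg (sliceEmbedding I z), norm_nonneg z]

theorem isometry_sliceEmbedding (hI : I ^ 2 = -1) : Isometry (sliceEmbedding I) :=
  AddMonoidHomClass.isometry_of_norm _ (norm_sliceEmbedding hI)

theorem IsPreconnected.preimage_sliceEmbedding (hI : I ^ 2 = -1) {U : Set ℍ}
    (hU : IsPreconnected (U ∩ slicePlane I)) : IsPreconnected (sliceEmbedding I ⁻¹' U) := by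
  rwa [← (isometry_sliceEmbedding hI).isEmbedding.isInducing.isPreconnected_image,
    Set.image_preimage_eq_inter_range, range_sliceEmbedding]

end sliceEmbedding

theorem AxiallySymmetric.preimage_sliceEmbedding_eq {U : Set ℍ} (hU : AxiallySymmetric U)
    {I J : ℍ} (hI : I ^ 2 = -1) (hJ : J ^ 2 = -1) :
    sliceEmbedding I ⁻¹' U = sliceEmbedding J ⁻¹' U := by
  ext z
  simp only [Set.mem_preimage, sliceEmbedding_apply]
  exact ⟨hU z.re z.im I J hI hJ, hU z.re z.im J I hJ hI⟩

theorem AxiallySymmetric.conj_mem_preimage_sliceEmbedding {U : Set ℍ} (hU : AxiallySymmetric U)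
    {I : ℍ} (hI : I ^ 2 = -1) {z : ℂ} (hz : z ∈ sliceEmbedding I ⁻¹' U) :
    starRingEnd ℂ z ∈ sliceEmbedding I ⁻¹' U := by
  rw [hU.preimage_sliceEmbedding_eq hI (by rwa [neg_sq] : (-I) ^ 2 = -1)] at hz
  rwa [Set.mem_preimage, ← sliceEmbedding_neg]

theorem IsPreconnected.exists_ofReal_mem {D : Set ℂ} (hD : IsPreconnected D)
    (hconj : ∀ z ∈ D, starRingEnd ℂ z ∈ D) {z : ℂ} (hz : z ∈ D) : ∃ r : ℝ, (r : ℂ) ∈ D := by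
  have him : (0 : ℝ) ∈ Complex.im '' D := by
    rcases le_total z.im 0 with h | h
    · exact hD.intermediate_value hz (hconj z hz) Complex.continuous_im.continuousOn
        ⟨h, by simpa using h⟩
    · exact hD.intermediate_value (hconj z hz) hz Complex.continuous_im.continuousOn
        ⟨by simpa using h, h⟩
  obtain ⟨w, hw, hw0⟩ := him
  exact ⟨w.re, by rwa [Complex.conj_eq_iff_re.mp (Complex.conj_eq_iff_im.mpr hw0)]⟩

def CauchyRiemannOn (I : ℍ) (g : ℂ → ℍ) (D : Set ℂ) : Prop :=
  ∀ z ∈ D, DifferentiableAt ℝ g z ∧ fderiv ℝ g z 1 + I * fderiv ℝ g z Complex.I = 0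

theorem SliceRegularOn.cauchyRiemannOn {f : ℍ → ℍ} {U : Set ℍ} (hU : IsOpen U)
    (hf : SliceRegularOn f U) {K : ℍ} (hK : K ^ 2 = -1) :
    CauchyRiemannOn K (fun z => f (sliceEmbedding K z)) (sliceEmbedding K ⁻¹' U) := by
  intro z hz
  have hd : DifferentiableAt ℝ (fun z => f (sliceEmbedding K z)) z :=
    (hf.1.differentiableAt (hU.mem_nhds hz)).comp z (sliceEmbedding K).differentiableAt
  refine ⟨hd, ?_⟩
  have hslice : (fun p : ℝ × ℝ => f ((p.1 : ℍ) + p.2 • K)) =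
      (fun z => f (sliceEmbedding K z)) ∘ Complex.equivRealProdCLM.symm := by
    funext p
    simp [Complex.equivRealProdCLM_symm_apply]
  have hz' : Complex.equivRealProdCLM.symm (z.re, z.im) = z := by
    simp [Complex.equivRealProdCLM_symm_apply]
  have h := hf.2 K hK z.re z.im (by simpa using hz)
  rw [hslice, fderiv_comp _ (by rwa [hz']) Complex.equivRealProdCLM.symm.differentiableAt,
    ContinuousLinearEquiv.fderiv] at h
  simpa [hz', Complex.equivRealProdCLM_symm_apply] using h

/-- `ℂ` acting on `ℍ` by left multiplication through `ℂ_I`; it depends on `I`, hence is not an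
instance. -/
abbrev sliceNormedSpace {I : ℍ} (hI : I ^ 2 = -1) : NormedSpace ℂ ℍ where
  toModule := Module.compHom ℍ (Complex.liftAux I ((sq I).symm.trans hI)).toRingHom
  norm_smul_le w q := by
    change ‖Complex.liftAux I ((sq I).symm.trans hI) w * q‖ ≤ ‖w‖ * ‖q‖
    rw [norm_mul, Complex.liftAux_apply, Quaternion.algebraMap_def, ← sliceEmbedding_apply,
      norm_sliceEmbedding hI]

namespace CauchyRiemannOn

variable {I K : ℍ} {g h : ℂ → ℍ} {D : Set ℂ}

theorem sub (hg : CauchyRiemannOn I g D) (hh : CauchyRiemannOn I h D) :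
    CauchyRiemannOn I (fun z => g z - h z) D := by
  intro z hz
  obtain ⟨hgd, hgz⟩ := hg z hz
  obtain ⟨hhd, hhz⟩ := hh z hz
  refine ⟨hgd.sub hhd, ?_⟩
  rw [fderiv_fun_sub hgd hhd, sub_apply, sub_apply, mul_sub, sub_add_sub_comm, hgz, hhz,
    sub_zero]

theorem const_mul {c : ℍ} (hc : I * c = c * K) (hg : CauchyRiemannOn K g D) :
    CauchyRiemannOn I (fun z => c * g z) D := by
  intro z hz
  obtain ⟨hgd, hgz⟩ := hg z hz
  refine ⟨hgd.const_mul c, ?_⟩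
  rw [fderiv_const_mul hgd, smul_apply, smul_apply, smul_eq_mul, smul_eq_mul, ← mul_assoc, hc,
    mul_assoc, ← mul_add, hgz, mul_zero]

theorem differentiableOn (hI : I ^ 2 = -1) (hg : CauchyRiemannOn I g D) :
    letI := sliceNormedSpace hI
    DifferentiableOn ℂ g D := by
  let := sliceNormedSpace hI
  have smul_def (w : ℂ) (q : ℍ) : w • q = sliceEmbedding I w * q := by
    change Complex.liftAux I ((sq I).symm.trans hI) w * q = _
    rw [Complex.liftAux_apply, Quaternion.algebraMap_def, sliceEmbedding_apply]
  have : IsScalarTower ℝ ℂ ℍ := ⟨fun a w q => by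
    rw [smul_def, smul_def, map_smul, smul_mul_assoc]⟩
  intro z hz
  obtain ⟨hgd, hgz⟩ := hg z hz
  refine ((differentiableAt_iff_restrictScalars ℝ hgd).mpr
    ⟨(ContinuousLinearMap.id ℂ ℂ).smulRight (fderiv ℝ g z 1), ?_⟩).differentiableWithinAt
  ext1 v
  have hI_apply : I * fderiv ℝ g z 1 = fderiv ℝ g z Complex.I := by
    rw [eq_neg_of_add_eq_zero_left hgz, mul_neg, ← mul_assoc, ← sq, hI, neg_one_mul, neg_neg]
  have hv : v = v.re • (1 : ℂ) + v.im • Complex.I := by simp [Complex.real_smul]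
  rw [ContinuousLinearMap.coe_restrictScalars', ContinuousLinearMap.smulRight_apply,
    ContinuousLinearMap.id_apply, smul_def, sliceEmbedding_apply]
  conv_rhs => rw [hv, map_add, map_smul, map_smul, ← hI_apply]
  rw [add_mul, Quaternion.coe_mul_eq_smul, smul_mul_assoc]

theorem eqOn_zero (hI : I ^ 2 = -1) (hg : CauchyRiemannOn I g D) (hDo : IsOpen D)
    (hDc : IsPreconnected D) {r : ℝ} (hr : (r : ℂ) ∈ D) (hg0 : ∀ t : ℝ, (t : ℂ) ∈ D → g t = 0) :
    Set.EqOn g 0 D := by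
  let := sliceNormedSpace hI
  have hD : ∀ᶠ t : ℝ in 𝓝 r, (t : ℂ) ∈ D :=
    Complex.continuous_ofReal.continuousAt.preimage_mem_nhds (hDo.mem_nhds hr)
  have hreal : ∀ᶠ t : ℝ in 𝓝[≠] r, g t = 0 := nhdsWithin_le_nhds (hD.mono hg0)
  have hfreq : ∃ᶠ w in 𝓝[≠] (r : ℂ), g w = 0 :=
    (Complex.continuous_ofReal.continuousWithinAt.tendsto_nhdsWithin
      fun _ ht => Complex.ofReal_injective.ne ht).frequently hreal.frequently
  exact ((hg.differentiableOn hI).analyticOnNhd hDo).eqOn_zero_of_preconnected_of_frequently_eq_zero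
      hDc hr hfreq

end CauchyRiemannOn

theorem SliceRegularOn.apply_sliceEmbedding_eq {U : Set ℍ} (hUopen : IsOpen U)
    (hUax : AxiallySymmetric U) {f : ℍ → ℍ} (hf : SliceRegularOn f U) {I J : ℍ}
    (hI : I ^ 2 = -1) (hJ : J ^ 2 = -1) (hUI : IsPreconnected (U ∩ slicePlane I)) {z : ℂ}
    (hz : sliceEmbedding I z ∈ U) :
    f (sliceEmbedding I z) = (1 / 2 : ℝ) • ((1 - I * J) * f (sliceEmbedding J z))
      + (1 / 2 : ℝ) • ((1 + I * J) * f (sliceEmbedding (-J) z)) := by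
  set D := sliceEmbedding I ⁻¹' U
  have hD : IsPreconnected D := hUI.preimage_sliceEmbedding hI
  obtain ⟨r, hr⟩ := hD.exists_ofReal_mem (fun _ => hUax.conj_mem_preimage_sliceEmbedding hI) hz
  have hslice {K : ℍ} (hK : K ^ 2 = -1) :
      CauchyRiemannOn K (fun w => f (sliceEmbedding K w)) D := by
    rw [show D = sliceEmbedding K ⁻¹' U from hUax.preimage_sliceEmbedding_eq hI hK]
    exact hf.cauchyRiemannOn hUopen hK
  have hI' : I * I = -1 := (sq I).symm.trans hI
  have hJ' : J * J = -1 := (sq J).symm.trans hJ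
  set c₁ : ℍ := (1 / 2 : ℝ) • (1 - I * J)
  set c₂ : ℍ := (1 / 2 : ℝ) • (1 + I * J)
  have hc₁ : I * c₁ = c₁ * J := by
    simp only [c₁, mul_smul_comm, smul_mul_assoc, mul_one_sub_mul_eq_one_sub_mul_mul hI' hJ']
  have hc₂ : I * c₂ = c₂ * -J := by
    simp only [c₂, mul_smul_comm, smul_mul_assoc, mul_one_add_mul_eq_one_add_mul_mul_neg hI' hJ']
  have hc : c₁ + c₂ = 1 := by
    rw [← smul_add, sub_add_add_cancel, ← two_smul ℝ, smul_smul]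
    norm_num
  have hg : CauchyRiemannOn I (fun w => f (sliceEmbedding I w) - c₁ * f (sliceEmbedding J w)
      - c₂ * f (sliceEmbedding (-J) w)) D :=
    ((hslice hI).sub ((hslice hJ).const_mul hc₁)).sub
      ((hslice (by rwa [neg_sq])).const_mul hc₂)
  have hg0 := hg.eqOn_zero hI (hUopen.preimage (sliceEmbedding I).continuous) hD hr
    (fun t _ => by simp only [sliceEmbedding_ofReal, sub_sub, ← add_mul, hc, one_mul, sub_self])
    hz
  rw [← smul_mul_assoc, ← smul_mul_assoc, ← sub_eq_zero, ← sub_sub]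
  exact hg0

theorem representation_formula_general
    (U : Set (Quaternion ℝ)) (hUopen : IsOpen U)
    (hUslices : ∀ I : Quaternion ℝ, I ^ 2 = -1 → IsPreconnected (U ∩ slicePlane I))
    (hUax : AxiallySymmetric U)
    (f : Quaternion ℝ → Quaternion ℝ) (hf : SliceRegularOn f U)
    (J : Quaternion ℝ) (hJ : J ^ 2 = -1) (x y : ℝ)
    (I : Quaternion ℝ) (hI : I ^ 2 = -1) (hq : ((x : Quaternion ℝ) + y • I) ∈ U) :
    f ((x : Quaternion ℝ) + y • I)
        = (1 / 2 : ℝ) • (f ((x : Quaternion ℝ) + y • J) + f ((x : Quaternion ℝ) - y • J))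
          + I * ((1 / 2 : ℝ) •
              (J * (f ((x : Quaternion ℝ) - y • J) - f ((x : Quaternion ℝ) + y • J)))) ∧
    f ((x : Quaternion ℝ) + y • I)
        = (1 / 2 : ℝ) • ((1 - I * J) * f ((x : Quaternion ℝ) + y • J))
          + (1 / 2 : ℝ) • ((1 + I * J) * f ((x : Quaternion ℝ) - y • J)) := by
  have h := hf.apply_sliceEmbedding_eq hUopen hUax hI hJ (hUslices I hI) (z := ⟨x, y⟩)
    (by simpa using hq)
  simp only [sliceEmbedding_apply, smul_neg, ← sub_eq_add_neg] at h
  refine ⟨?_, h⟩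
  rw [h, mul_smul_comm, ← smul_add, ← smul_add]
  congr 1
  noncomm_ring

/-- **Representation Formula.** Let `U ⊆ ℍ` be an axially symmetric s-domain (a connected
open set whose intersection with every slice plane is connected) and `f` slice regular
on `U`. If `J² = -1` and `x ± Jy ∈ U`, then for every `I` with `I² = -1` and
`x + Iy ∈ U`,
`f(x+Iy) = (1/2)[f(x+Jy) + f(x−Jy)] + I (1/2) J [f(x−Jy) − f(x+Jy)]`, equivalently
`f(x+Iy) = (1/2)(1−IJ) f(x+Jy) + (1/2)(1+IJ) f(x−Jy)`. -/
theorem representation_formula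
    (U : Set (Quaternion ℝ)) (hUopen : IsOpen U) (hUconn : IsConnected U)
    (hUslices : ∀ I : Quaternion ℝ, I ^ 2 = -1 → IsPreconnected (U ∩ slicePlane I))
    (hUax : AxiallySymmetric U)
    (f : Quaternion ℝ → Quaternion ℝ) (hf : SliceRegularOn f U)
    (J : Quaternion ℝ) (hJ : J ^ 2 = -1) (x y : ℝ)
    (hp : ((x : Quaternion ℝ) + y • J) ∈ U) (hm : ((x : Quaternion ℝ) - y • J) ∈ U)
    (I : Quaternion ℝ) (hI : I ^ 2 = -1) (hq : ((x : Quaternion ℝ) + y • I) ∈ U) :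
    f ((x : Quaternion ℝ) + y • I)
        = (1 / 2 : ℝ) • (f ((x : Quaternion ℝ) + y • J) + f ((x : Quaternion ℝ) - y • J))
          + I * ((1 / 2 : ℝ) •
              (J * (f ((x : Quaternion ℝ) - y • J) - f ((x : Quaternion ℝ) + y • J)))) ∧
    f ((x : Quaternion ℝ) + y • I)
        = (1 / 2 : ℝ) • ((1 - I * J) * f ((x : Quaternion ℝ) + y • J))
          + (1 / 2 : ℝ) • ((1 + I * J) * f ((x : Quaternion ℝ) - y • J)) :=
  representation_formula_general U hUopen hUslices hUax f hf J hJ x y I hI hq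
end
end

section
/- Let G ⊂ ℂ, G ≠ ℂ, be a nonempty simply connected domain with G ∩ ℝ ≠ ∅, let x₀ ∈ G ∩ ℝ, and let f : G → 𝔻 be the unique bijective holomorphic function onto the open unit disc 𝔻 with f(x₀) = 0 and f′(x₀) > 0 (which exists by the Riemann mapping theorem). Then the inverse f⁻¹ : 𝔻 → G is typically real if and only if G is symmetric with respect to the real axis. -/
/-! If `G` is symmetric, `conj ∘ f ∘ conj` is another holomorphic map of `G` into `𝔻` with the
same normalization at `x₀`; composed with `f⁻¹` it is a self-map of `𝔻` fixing `0` with derivative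
`1`, so by Schwarz's lemma it equals `f`. Hence `f⁻¹` commutes with conjugation, and being
injective it is real exactly on the real diameter. Conversely, if `f⁻¹` is real on the real
diameter, the identity theorem gives `f⁻¹ ∘ conj = conj ∘ f⁻¹` on `𝔻`, so `G = f⁻¹(𝔻)` is
symmetric. That `f⁻¹` is holomorphic at all follows from the open mapping theorem, the isolatedness
of critical points, and the removable singularity theorem. -/

open Complex

/-- `g` is typically real on the unit disc `𝔻`: it is univalent (injective and
holomorphic) on `𝔻` and takes real values exactly on `𝔻 ∩ ℝ`. -/
def TypicallyReal (g : ℂ → ℂ) : Prop :=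
  DifferentiableOn ℂ g (Metric.ball 0 1) ∧ Set.InjOn g (Metric.ball 0 1) ∧
  ∀ z ∈ Metric.ball (0 : ℂ) 1, ((g z).im = 0 ↔ z.im = 0)

open ComplexConjugate Metric Set Filter Topology

lemma Set.InjOn.not_eventually_eq {X Y : Type*} [TopologicalSpace X] {f : X → Y} {U : Set X}
    {x : X} [(𝓝[≠] x).NeBot] (hinj : InjOn f U) (hU : U ∈ 𝓝 x) :
    ¬ ∀ᶠ z in 𝓝 x, f z = f x := by
  intro h
  have h' : ∀ᶠ z in 𝓝[≠] x, f z = f x ∧ z ∈ U := nhdsWithin_le_nhds (h.and hU)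
  obtain ⟨z, ⟨hfz, hzU⟩, hzx⟩ := (h'.and self_mem_nhdsWithin).exists
  exact hzx (hinj hzU (mem_of_mem_nhds hU) hfz)

section InjectiveHolomorphic

variable {f g : ℂ → ℂ} {U : Set ℂ} {x : ℂ}

lemma nhds_le_map_nhds_of_injOn (hU : IsOpen U) (hf : DifferentiableOn ℂ f U)
    (hinj : InjOn f U) (hx : x ∈ U) : 𝓝 (f x) ≤ map f (𝓝 x) :=
  (hf.analyticAt (hU.mem_nhds hx)).eventually_constant_or_nhds_le_map_nhds.resolve_left
    (hinj.not_eventually_eq (hU.mem_nhds hx))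

lemma eventually_deriv_ne_zero_of_injOn (hU : IsOpen U) (hf : DifferentiableOn ℂ f U)
    (hinj : InjOn f U) (hx : x ∈ U) : ∀ᶠ z in 𝓝[≠] x, deriv f z ≠ 0 := by
  have hfa := hf.analyticAt (hU.mem_nhds hx)
  refine hfa.deriv.eventually_eq_zero_or_eventually_ne_zero.resolve_left fun h => ?_
  have horder := hfa.analyticOrderAt_deriv_add_one
  rw [analyticOrderAt_eq_top.mpr h, top_add, eq_comm, analyticOrderAt_eq_top] at horder
  exact hinj.not_eventually_eq (hU.mem_nhds hx) (by simpa only [sub_eq_zero] using horder)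

namespace Set.LeftInvOn

lemma continuousAt_of_injOn (hg : LeftInvOn g f U) (hU : IsOpen U)
    (hf : DifferentiableOn ℂ f U) (hinj : InjOn f U) (hx : x ∈ U) : ContinuousAt g (f x) := by
  have hgf : Tendsto (g ∘ f) (𝓝 x) (𝓝 x) :=
    tendsto_id.congr' (eventuallyEq_of_mem (hU.mem_nhds hx) fun z hz => (hg hz).symm)
  rw [ContinuousAt, hg hx]
  exact (tendsto_map'_iff.mpr hgf).mono_left (nhds_le_map_nhds_of_injOn hU hf hinj hx)

lemma eventually_rightInverse_of_injOn (hg : LeftInvOn g f U) (hU : IsOpen U)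
    (hf : DifferentiableOn ℂ f U) (hinj : InjOn f U) (hx : x ∈ U) :
    ∀ᶠ y in 𝓝 (f x), f (g y) = y := by
  refine nhds_le_map_nhds_of_injOn hU hf hinj hx (mem_map.mpr ?_)
  filter_upwards [hU.mem_nhds hx] with z hz
  exact congrArg f (hg hz)

lemma hasDerivAt_of_injOn (hg : LeftInvOn g f U) (hU : IsOpen U)
    (hf : DifferentiableOn ℂ f U) (hinj : InjOn f U) (hx : x ∈ U) (hf' : deriv f x ≠ 0) :
    HasDerivAt g (deriv f x)⁻¹ (f x) := by
  refine .of_local_left_inverse (hg.continuousAt_of_injOn hU hf hinj hx) ?_ hf'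
    (hg.eventually_rightInverse_of_injOn hU hf hinj hx)
  rw [hg hx]
  exact (hf.differentiableAt (hU.mem_nhds hx)).hasDerivAt

lemma differentiableAt_of_injOn (hg : LeftInvOn g f U) (hU : IsOpen U)
    (hf : DifferentiableOn ℂ f U) (hinj : InjOn f U) (hx : x ∈ U) :
    DifferentiableAt ℂ g (f x) := by
  have hfg := hg.eventually_rightInverse_of_injOn hU hf hinj hx
  have hgx : Tendsto g (𝓝[≠] (f x)) (𝓝[≠] x) := by
    refine tendsto_nhdsWithin_of_tendsto_nhds_of_eventually_within _ ?_ ?_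
    · simpa only [hg hx] using (hg.continuousAt_of_injOn hU hf hinj hx).tendsto.mono_left
        nhdsWithin_le_nhds
    · filter_upwards [eventually_nhdsWithin_of_eventually_nhds hfg, self_mem_nhdsWithin]
        with y hy hyx hgy
      exact hyx (by rw [mem_singleton_iff, ← hy, hgy])
  -- `g` is differentiable away from `f x` by the inverse function theorem, since critical
  -- points of `f` are isolated; the singularity at `f x` is removable as `g` is continuous.
  refine (analyticAt_of_differentiable_on_punctured_nhds_of_continuousAt ?_
    (hg.continuousAt_of_injOn hU hf hinj hx)).differentiableAt
  filter_upwards [hgx.eventually (eventually_deriv_ne_zero_of_injOn hU hf hinj hx),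
    hgx.eventually (mem_nhdsWithin_of_mem_nhds (hU.mem_nhds hx)),
    eventually_nhdsWithin_of_eventually_nhds hfg] with y hy' hyU hy
  rw [← hy]
  exact (hg.hasDerivAt_of_injOn hU hf hinj hyU hy').differentiableAt

lemma differentiableOn_of_bijOn {V : Set ℂ} (hg : LeftInvOn g f U) (hU : IsOpen U)
    (hf : DifferentiableOn ℂ f U) (hbij : BijOn f U V) : DifferentiableOn ℂ g V := by
  intro w hw
  obtain ⟨z, hz, rfl⟩ := hbij.surjOn hw
  exact (hg.differentiableAt_of_injOn hU hf hbij.injOn hz).differentiableWithinAt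

end Set.LeftInvOn

end InjectiveHolomorphic

lemma eqOn_id_of_mapsTo_ball_of_deriv_eq_one {φ : ℂ → ℂ} {c : ℂ} {R : ℝ}
    (hd : DifferentiableOn ℂ φ (ball c R)) (hmaps : MapsTo φ (ball c R) (closedBall c R))
    (hc : φ c = c) (hderiv : deriv φ c = 1) : EqOn φ id (ball c R) := by
  intro z hz
  have hR : 0 < R := pos_of_mem_ball hz
  have := Complex.affine_of_mapsTo_ball_of_norm_dslope_eq_div hd (by rwa [hc])
    (mem_ball_self hR) (by rw [dslope_same, hderiv, norm_one, div_self hR.ne'])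
  simpa [hc, dslope_same, hderiv] using this hz

lemma eqOn_of_bijOn_ball_of_deriv_eq {f F : ℂ → ℂ} {U : Set ℂ} {x : ℂ} (hU : IsOpen U)
    (hf : DifferentiableOn ℂ f U) (hbij : BijOn f U (ball 0 1))
    (hF : DifferentiableOn ℂ F U) (hFmaps : MapsTo F U (ball 0 1)) (hx : x ∈ U)
    (hf0 : f x = 0) (hF0 : F x = 0) (hf' : deriv f x ≠ 0) (hderiv : deriv F x = deriv f x) :
    EqOn F f U := by
  set g := Function.invFunOn f U
  have hg : LeftInvOn g f U := hbij.injOn.leftInvOn_invFunOn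
  have hgU : MapsTo g (ball 0 1) U := hbij.surjOn.mapsTo_invFunOn
  have hg0 : g 0 = x := hf0 ▸ hg hx
  have hg' : HasDerivAt g (deriv f x)⁻¹ 0 := hf0 ▸ hg.hasDerivAt_of_injOn hU hf hbij.injOn hx hf'
  have hF' : HasDerivAt F (deriv f x) (g 0) := by
    rw [hg0, ← hderiv]
    exact (hF.differentiableAt (hU.mem_nhds hx)).hasDerivAt
  -- Schwarz's lemma forces `F ∘ g`, a self-map of the disc fixing `0` with derivative `1`,
  -- to be the identity.
  have hFg : EqOn (F ∘ g) id (ball 0 1) := by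
    refine eqOn_id_of_mapsTo_ball_of_deriv_eq_one
      (hF.comp (hg.differentiableOn_of_bijOn hU hf hbij) hgU)
      ((hFmaps.comp hgU).mono_right ball_subset_closedBall) (by simp [hg0, hF0]) ?_
    rw [(hF'.comp 0 hg').deriv, mul_inv_cancel₀ hf']
  intro z hz
  simpa [hg hz] using hFg (hbij.mapsTo hz)

section Conjugation

variable {f g : ℂ → ℂ} {U : Set ℂ}

lemma DifferentiableOn.conj_conj (hU : IsOpen U) (hsymm : ∀ z ∈ U, conj z ∈ U)
    (hf : DifferentiableOn ℂ f U) : DifferentiableOn ℂ (conj ∘ f ∘ conj) U := fun z hz =>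
  (differentiableAt_conj_conj_iff.mpr
    (hf.differentiableAt (hU.mem_nhds (hsymm z hz)))).differentiableWithinAt

lemma conj_mem_ball_zero {w : ℂ} {R : ℝ} (hw : w ∈ ball 0 R) : conj w ∈ ball 0 R := by
  simpa only [mem_ball_zero_iff, norm_conj] using hw

lemma map_conj_of_im_eq_zero (hU : IsOpen U) (hUc : IsPreconnected U)
    (hsymm : ∀ z ∈ U, conj z ∈ U) {x₀ : ℝ} (hx₀ : (x₀ : ℂ) ∈ U) (hg : DifferentiableOn ℂ g U)
    (hreal : ∀ x : ℝ, (x : ℂ) ∈ U → (g x).im = 0) : ∀ w ∈ U, g (conj w) = conj (g w) := by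
  have hofReal : Tendsto ((↑) : ℝ → ℂ) (𝓝[≠] x₀) (𝓝[≠] (x₀ : ℂ)) :=
    tendsto_nhdsWithin_of_tendsto_nhds_of_eventually_within _
      (continuous_ofReal.tendsto x₀ |>.mono_left nhdsWithin_le_nhds)
      (eventually_nhdsWithin_of_forall fun x hx => by simpa using hx)
  have hU₀ : ∀ᶠ x : ℝ in 𝓝[≠] x₀, (x : ℂ) ∈ U :=
    nhdsWithin_le_nhds (continuous_ofReal.continuousAt.preimage_mem_nhds (hU.mem_nhds hx₀))
  have heq : EqOn (conj ∘ g ∘ conj) g U := by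
    refine ((hg.conj_conj hU hsymm).analyticOnNhd hU).eqOn_of_preconnected_of_frequently_eq
      (hg.analyticOnNhd hU) hUc hx₀ (hofReal.frequently (hU₀.mono fun x hx => ?_).frequently)
    simp only [Function.comp_apply, conj_ofReal]
    exact conj_eq_iff_im.mpr (hreal x hx)
  intro w hw
  simpa using (heq (hsymm w hw)).symm

lemma im_eq_zero_iff_of_map_conj (hinj : InjOn g U) (hsymm : ∀ z ∈ U, conj z ∈ U)
    (hg : ∀ w ∈ U, g (conj w) = conj (g w)) {w : ℂ} (hw : w ∈ U) :
    (g w).im = 0 ↔ w.im = 0 := by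
  rw [← conj_eq_iff_im, ← conj_eq_iff_im, ← hg w hw]
  exact hinj.eq_iff (hsymm w hw) hw

lemma Set.InvOn.map_conj {V : Set ℂ} (hg : InvOn g f U V) (hgV : MapsTo g V U)
    (hsymm : ∀ z ∈ U, conj z ∈ U) (hf : ∀ z ∈ U, f (conj z) = conj (f z)) :
    ∀ w ∈ V, g (conj w) = conj (g w) := by
  intro w hw
  have hfw := hf (g w) (hgV hw)
  rw [hg.2 hw] at hfw
  rw [← hfw, hg.1 (hsymm _ (hgV hw))]

end Conjugation

theorem riemann_map_inverse_typically_real_iff_symmetric_general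
    (G : Set ℂ)
    (hGopen : IsOpen G)
    (x₀ : ℝ) (hx₀ : (x₀ : ℂ) ∈ G)
    (f : ℂ → ℂ) (hfd : DifferentiableOn ℂ f G)
    (hfbij : Set.BijOn f G (Metric.ball 0 1))
    (hf0 : f (x₀ : ℂ) = 0) (hf' : ∃ r : ℝ, 0 < r ∧ deriv f (x₀ : ℂ) = (r : ℂ))
    (g : ℂ → ℂ) (hg : Set.InvOn g f G (Metric.ball 0 1)) :
    TypicallyReal g ↔ (∀ z ∈ G, (starRingEnd ℂ) z ∈ G) := by
  have hgbij : BijOn g (ball 0 1) G := hfbij.symm hg.symm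
  constructor
  · rintro ⟨hgd, -, hreal⟩ z hz
    have hgconj := map_conj_of_im_eq_zero isOpen_ball (convex_ball 0 1).isPreconnected
      (fun w => conj_mem_ball_zero) (x₀ := 0) (by simp) hgd
      fun x hx => (hreal x hx).mpr (ofReal_im x)
    have hfz := hfbij.mapsTo hz
    simpa [hgconj _ hfz, hg.1 hz] using hgbij.mapsTo (conj_mem_ball_zero hfz)
  · intro hsym
    obtain ⟨r, hr, hfr⟩ := hf'
    have hfconj : EqOn (conj ∘ f ∘ conj) f G :=
      eqOn_of_bijOn_ball_of_deriv_eq hGopen hfd hfbij (hfd.conj_conj hGopen hsym)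
        (fun z hz => conj_mem_ball_zero (hfbij.mapsTo (hsym z hz))) hx₀ hf0 (by simp [hf0])
        (by rw [hfr]; exact_mod_cast hr.ne') (by simp [hfr])
    have hgconj : ∀ w ∈ ball 0 1, g (conj w) = conj (g w) :=
      hg.map_conj hgbij.mapsTo hsym fun z hz => by simpa using congrArg conj (hfconj hz)
    exact ⟨hg.1.differentiableOn_of_bijOn hGopen hfd hfbij, hgbij.injOn,
      fun w => im_eq_zero_iff_of_map_conj hgbij.injOn (fun w => conj_mem_ball_zero) hgconj⟩

/-- Let `G ⊂ ℂ`, `G ≠ ℂ`, be a nonempty simply connected domain meeting the real axis,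
`x₀ ∈ G ∩ ℝ`, and let `f : G → 𝔻` be the (unique) bijective holomorphic map with
`f(x₀) = 0`, `f'(x₀) > 0`. Then the inverse `f⁻¹ : 𝔻 → G` is typically real if and only
if `G` is symmetric with respect to the real axis. -/
theorem riemann_map_inverse_typically_real_iff_symmetric
    (G : Set ℂ) (hGne : G.Nonempty) (hGproper : G ≠ Set.univ)
    (hGopen : IsOpen G) (hGconn : IsConnected G) (hGsc : SimplyConnectedSpace ↥G)
    (hGR : ∃ x : ℝ, (x : ℂ) ∈ G)
    (x₀ : ℝ) (hx₀ : (x₀ : ℂ) ∈ G)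
    (f : ℂ → ℂ) (hfd : DifferentiableOn ℂ f G)
    (hfbij : Set.BijOn f G (Metric.ball 0 1))
    (hf0 : f (x₀ : ℂ) = 0) (hf' : ∃ r : ℝ, 0 < r ∧ deriv f (x₀ : ℂ) = (r : ℂ))
    (g : ℂ → ℂ) (hg : Set.InvOn g f G (Metric.ball 0 1)) :
    TypicallyReal g ↔ (∀ z ∈ G, (starRingEnd ℂ) z ∈ G) :=
  riemann_map_inverse_typically_real_iff_symmetric_general G hGopen x₀ hx₀ f hfd hfbij hf0 hf' g hg
end

section
/- Let G ⊂ ℂ, G ≠ ℂ, be a nonempty simply connected domain with G ∩ ℝ ≠ ∅, let x₀ ∈ G ∩ ℝ, and let f : G → 𝔻 be the unique bijective holomorphic function onto the open unit disc 𝔻 with f(x₀) = 0 and f′(x₀) > 0. Then the inverse f⁻¹ : 𝔻 → G is typically real if and only if f is complex intrinsic, that is, G is symmetric with respect to the real axis and f(conj(z)) = conj(f(z)) for all z ∈ G. -/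
open Complex
open Filter Metric Set
open scoped Topology

private lemma hasDerivAt_conj_conj {g : ℂ → ℂ} {z c : ℂ}
    (h : HasDerivAt g c ((starRingEnd ℂ) z)) :
    HasDerivAt (fun w => (starRingEnd ℂ) (g ((starRingEnd ℂ) w))) ((starRingEnd ℂ) c) z := by
  rw [hasDerivAt_iff_tendsto_slope] at h ⊢
  have hconj : Tendsto (fun w => (starRingEnd ℂ) w) (𝓝[≠] z) (𝓝[≠] ((starRingEnd ℂ) z)) := by
    rw [tendsto_nhdsWithin_iff]
    refine ⟨(Complex.continuous_conj.tendsto z).mono_left nhdsWithin_le_nhds, ?_⟩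
    filter_upwards [self_mem_nhdsWithin] with w hw
    exact fun hc => hw ((starRingEnd ℂ).injective hc)
  have hT : Tendsto (fun w => (starRingEnd ℂ)
      (slope g ((starRingEnd ℂ) z) ((starRingEnd ℂ) w))) (𝓝[≠] z) (𝓝 ((starRingEnd ℂ) c)) :=
    (Complex.continuous_conj.tendsto c).comp (h.comp hconj)
  refine hT.congr fun w => ?_
  simp [slope_def_field, map_div₀, map_sub]

/-- Let `G ⊂ ℂ`, `G ≠ ℂ`, be a nonempty simply connected domain meeting the real axis,
`x₀ ∈ G ∩ ℝ`, and let `f : G → 𝔻` be the (unique) bijective holomorphic map with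
`f(x₀) = 0`, `f'(x₀) > 0`. Then `f⁻¹ : 𝔻 → G` is typically real if and only if `f` is
complex intrinsic, i.e. `G` is symmetric with respect to the real axis and
`f(conj z) = conj (f z)` on `G`. -/
theorem riemann_map_inverse_typically_real_iff_intrinsic
    (G : Set ℂ) (hGne : G.Nonempty) (hGproper : G ≠ Set.univ)
    (hGopen : IsOpen G) (hGconn : IsConnected G) (hGsc : SimplyConnectedSpace ↥G)
    (hGR : ∃ x : ℝ, (x : ℂ) ∈ G)
    (x₀ : ℝ) (hx₀ : (x₀ : ℂ) ∈ G)
    (f : ℂ → ℂ) (hfd : DifferentiableOn ℂ f G)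
    (hfbij : Set.BijOn f G (Metric.ball 0 1))
    (hf0 : f (x₀ : ℂ) = 0) (hf' : ∃ r : ℝ, 0 < r ∧ deriv f (x₀ : ℂ) = (r : ℂ))
    (g : ℂ → ℂ) (hg : Set.InvOn g f G (Metric.ball 0 1)) :
    TypicallyReal g ↔
      ((∀ z ∈ G, (starRingEnd ℂ) z ∈ G) ∧
        ∀ z ∈ G, f ((starRingEnd ℂ) z) = (starRingEnd ℂ) (f z)) := by
  obtain ⟨r, hrpos, hderivx₀⟩ := hf'
  have hGpre : IsPreconnected G := hGconn.isPreconnected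
  have hfan : AnalyticOnNhd ℂ f G := hfd.analyticOnNhd hGopen
  have hgmaps : ∀ w ∈ Metric.ball (0 : ℂ) 1, g w ∈ G := by
    intro w hw
    obtain ⟨z, hz, rfl⟩ := hfbij.surjOn hw
    rw [hg.1 hz]; exact hz
  have hfg : ∀ w ∈ Metric.ball (0 : ℂ) 1, f (g w) = w := fun w hw => hg.2 hw
  have hconj_ball : ∀ w ∈ Metric.ball (0 : ℂ) 1, (starRingEnd ℂ) w ∈ Metric.ball (0 : ℂ) 1 := by
    intro w hw
    simpa [Metric.mem_ball, dist_zero_right, RCLike.norm_conj] using hw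
  constructor
  · -- forward: typically real ⇒ intrinsic
    rintro ⟨hgd, hginj, hgreal⟩
    set h : ℂ → ℂ := fun w => (starRingEnd ℂ) (g ((starRingEnd ℂ) w)) with hh
    have hhd : DifferentiableOn ℂ h (Metric.ball 0 1) := by
      intro w hw
      have hcw := hconj_ball w hw
      have := (hgd.differentiableAt (isOpen_ball.mem_nhds hcw)).hasDerivAt
      exact (hasDerivAt_conj_conj this).differentiableAt.differentiableWithinAt
    have freq : ∃ᶠ z in 𝓝[≠] (0 : ℂ), g z = h z := by
      have hu : Tendsto (fun n : ℕ => ((1 / (n + 2) : ℝ) : ℂ)) atTop (𝓝[≠] (0 : ℂ)) := by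
        rw [tendsto_nhdsWithin_iff]
        constructor
        · have h0 : Tendsto (fun n : ℕ => (1 / ((n : ℝ) + 2))) atTop (𝓝 0) := by
            simp only [one_div]
            exact tendsto_inv_atTop_zero.comp
              (tendsto_atTop_add_const_right _ 2 tendsto_natCast_atTop_atTop)
          have := (Complex.continuous_ofReal.tendsto 0).comp h0
          simpa [Function.comp_def] using this
        · refine Filter.Eventually.of_forall fun n => ?_
          simp only [Set.mem_compl_iff, Set.mem_singleton_iff]
          intro hc
          have : (1 / (n + 2) : ℝ) = 0 := by exact_mod_cast hc
          have h2 : (0:ℝ) < (n:ℝ) + 2 := by positivity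
          rw [div_eq_zero_iff] at this
          rcases this with h1 | h1
          · norm_num at h1
          · linarith
      refine hu.frequently (Filter.Eventually.of_forall fun n => ?_).frequently
      have hmem : ((1 / (n + 2) : ℝ) : ℂ) ∈ Metric.ball (0 : ℂ) 1 := by
        have h2 : (0:ℝ) < (n:ℝ) + 2 := by positivity
        have habs : |1 / ((n:ℝ) + 2)| < 1 := by
          rw [abs_of_pos (by positivity)]
          rw [div_lt_one h2]; linarith
        rw [Metric.mem_ball, dist_zero_right, Complex.norm_real, Real.norm_eq_abs]
        exact habs
      have him : (((1 / (n + 2) : ℝ) : ℂ)).im = 0 := by simp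
      have hgim : (g ((1 / (n + 2) : ℝ) : ℂ)).im = 0 := (hgreal _ hmem).2 him
      have hcz : (starRingEnd ℂ) (((1 / (n + 2) : ℝ) : ℂ)) = (((1 / (n + 2) : ℝ) : ℂ)) :=
        Complex.conj_eq_iff_im.mpr him
      simp only [hh, hcz]
      exact (Complex.conj_eq_iff_im.mpr hgim).symm
    have heq : Set.EqOn g h (Metric.ball 0 1) :=
      (hgd.analyticOnNhd isOpen_ball).eqOn_of_preconnected_of_frequently_eq
        (hhd.analyticOnNhd isOpen_ball) (convex_ball (0:ℂ) 1).isPreconnected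
        (mem_ball_self one_pos) freq
    have main : ∀ z ∈ G, (starRingEnd ℂ) z ∈ G ∧ f ((starRingEnd ℂ) z) = (starRingEnd ℂ) (f z) := by
      intro z hz
      have hw : f z ∈ Metric.ball (0:ℂ) 1 := hfbij.mapsTo hz
      have hcw : (starRingEnd ℂ) (f z) ∈ Metric.ball (0:ℂ) 1 := hconj_ball _ hw
      have hgw : g (f z) = z := hg.1 hz
      have h1 : g ((starRingEnd ℂ) (f z)) = (starRingEnd ℂ) z := by
        have := heq hcw
        simp only [hh, Complex.conj_conj] at this
        rw [this, hgw]
      refine ⟨h1 ▸ hgmaps _ hcw, ?_⟩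
      rw [← h1, hfg _ hcw]
    exact ⟨fun z hz => (main z hz).1, fun z hz => (main z hz).2⟩
  · -- reverse: intrinsic ⇒ typically real
    rintro ⟨hsym, hcomm⟩
    have hDan : AnalyticOnNhd ℂ (deriv f) G := hfan.deriv
    have hisol : ∀ z ∈ G, ∀ᶠ z' in 𝓝[≠] z, deriv f z' ≠ 0 := by
      intro z hz
      rcases (hDan z hz).eventually_eq_zero_or_eventually_ne_zero with hcase | hcase
      · exfalso
        have hfreq : ∃ᶠ z' in 𝓝[≠] z, deriv f z' = 0 :=
          (hcase.filter_mono nhdsWithin_le_nhds).frequently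
        have := hDan.eqOn_zero_of_preconnected_of_frequently_eq_zero hGpre hz hfreq hx₀
        rw [hderivx₀] at this
        simp only [Pi.zero_apply, Complex.ofReal_eq_zero] at this
        exact hrpos.ne' this
      · exact hcase
    have key : ∀ z ∈ G, deriv f z ≠ 0 → DifferentiableAt ℂ g (f z) := by
      intro z hz hne
      obtain ⟨p, hp⟩ := hfan z hz
      have hsd : HasStrictDerivAt f (deriv f z) z := by
        have := hp.hasStrictDerivAt
        rwa [← hp.deriv] at this
      have hev : ∀ᶠ x in 𝓝 z, g (f x) = x := by
        filter_upwards [hGopen.mem_nhds hz] with x hx using hg.1 hx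
      exact (hsd.to_local_left_inverse hne hev).hasDerivAt.differentiableAt
    have hmap : ∀ w ∈ Metric.ball (0:ℂ) 1, 𝓝 w ≤ Filter.map f (𝓝 (g w)) := by
      intro w hw
      have hz : g w ∈ G := hgmaps w hw
      have hfz : f (g w) = w := hfg w hw
      have nonconst : ¬ ∀ᶠ x in 𝓝 (g w), f x = f (g w) := by
        intro hcon
        have h1 : ∃ᶠ x in 𝓝[≠] (g w), f x = f (g w) ∧ x ∈ G := by
          apply Filter.Frequently.and_eventually
          · exact (hcon.filter_mono nhdsWithin_le_nhds).frequently
          · exact eventually_nhdsWithin_of_eventually_nhds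
              (eventually_of_mem (hGopen.mem_nhds hz) fun x hx => hx)
        have h2 : ∃ᶠ x in 𝓝[≠] (g w), (f x = f (g w) ∧ x ∈ G) ∧ x ≠ g w :=
          h1.and_eventually self_mem_nhdsWithin
        obtain ⟨x, ⟨hx1, hx2⟩, hx3⟩ := h2.exists
        exact hx3 (hfbij.injOn hx2 hz hx1)
      have := ((hfan _ hz).eventually_constant_or_nhds_le_map_nhds).resolve_left nonconst
      rwa [hfz] at this
    have hcont : ∀ w ∈ Metric.ball (0:ℂ) 1, ContinuousAt g w := by
      intro w hw
      have hz : g w ∈ G := hgmaps w hw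
      have h2 : Tendsto (g ∘ f) (𝓝 (g w)) (𝓝 (g w)) := by
        have heq : g ∘ f =ᶠ[𝓝 (g w)] id := by
          filter_upwards [hGopen.mem_nhds hz] with x hx using hg.1 hx
        rw [tendsto_congr' heq]; exact tendsto_id
      have : Filter.map g (𝓝 w) ≤ 𝓝 (g w) :=
        calc Filter.map g (𝓝 w) ≤ Filter.map g (Filter.map f (𝓝 (g w))) :=
              Filter.map_mono (hmap w hw)
          _ = Filter.map (g ∘ f) (𝓝 (g w)) := Filter.map_map
          _ ≤ 𝓝 (g w) := h2
      exact this
    have hgdiff : ∀ w ∈ Metric.ball (0:ℂ) 1, DifferentiableAt ℂ g w := by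
      intro w hw
      have hzG : g w ∈ G := hgmaps w hw
      have hfz : f (g w) = w := hfg w hw
      by_cases hne : deriv f (g w) = 0
      · refine (Complex.analyticAt_of_differentiable_on_punctured_nhds_of_continuousAt ?_
          (hcont w hw)).differentiableAt
        have hisol' : ∀ᶠ x in 𝓝 (g w), (x ≠ g w → deriv f x ≠ 0) ∧ x ∈ G := by
          refine Filter.Eventually.and ?_ (eventually_of_mem (hGopen.mem_nhds hzG) fun x hx => hx)
          have h3 := hisol _ hzG
          rw [eventually_nhdsWithin_iff] at h3
          filter_upwards [h3] with x hx hxne using hx hxne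
        have himg : f '' {x : ℂ | (x ≠ g w → deriv f x ≠ 0) ∧ x ∈ G} ∈ 𝓝 w :=
          hmap w hw (Filter.image_mem_map hisol')
        rw [eventually_nhdsWithin_iff]
        filter_upwards [himg] with w' hw' hne'
        simp only [Set.mem_compl_iff, Set.mem_singleton_iff] at hne'
        obtain ⟨x, ⟨hx1, hx2⟩, rfl⟩ := hw'
        have hxz : x ≠ g w := by
          rintro rfl
          exact hne' hfz
        exact key x hx2 (hx1 hxz)
      · have := key _ hzG hne
        rwa [hfz] at this
    have hgc : ∀ w ∈ Metric.ball (0:ℂ) 1, g ((starRingEnd ℂ) w) = (starRingEnd ℂ) (g w) := by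
      intro w hw
      have hz : g w ∈ G := hgmaps w hw
      have h1 : (starRingEnd ℂ) (g w) ∈ G := hsym _ hz
      have h2 : f ((starRingEnd ℂ) (g w)) = (starRingEnd ℂ) w := by
        rw [hcomm _ hz, hfg w hw]
      calc g ((starRingEnd ℂ) w) = g (f ((starRingEnd ℂ) (g w))) := by rw [h2]
        _ = (starRingEnd ℂ) (g w) := hg.1 h1
    refine ⟨fun w hw => (hgdiff w hw).differentiableWithinAt, ?_, ?_⟩
    · intro w₁ h₁ w₂ h₂ he
      rw [← hfg w₁ h₁, ← hfg w₂ h₂, he]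
    · intro w hw
      constructor
      · intro him
        have hcw := hconj_ball w hw
        have h1 : g ((starRingEnd ℂ) w) = g w := by
          rw [hgc w hw, Complex.conj_eq_iff_im.mpr him]
        have h2 := congrArg f h1
        rw [hfg _ hcw, hfg _ hw] at h2
        exact Complex.conj_eq_iff_im.mp h2
      · intro him
        have h1 : (starRingEnd ℂ) w = w := Complex.conj_eq_iff_im.mpr him
        have : g w = (starRingEnd ℂ) (g w) := by rw [← hgc w hw, h1]
        exact Complex.conj_eq_iff_im.mp this.symm
end

section
/- Quantitative approximation on compact balls: let R > 0, let K = {q ∈ ℍ : ‖q‖ ≤ R}, and let f : K → ℍ be continuous on K and slice regular on B(0;R) = {q : ‖q‖ < R}, with power series expansion f(q) = ∑_{k=0}^∞ q^k c_k for q ∈ B(0;R). For n ∈ ℕ define the polynomial P_n(q) = ∑_{l=0}^n q^l c_l · (n!)² / ((n−l)!(n+l)!). Then for all q ∈ K and all n ∈ ℕ one has ‖P_n(q) − f(q)‖ ≤ 3(R+1) ω₁(f; 1/√n). In particular, for every ε > 0 there exists a polynomial P with ‖f(q) − P(q)‖ < ε for all q ∈ K. -/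
noncomputable section

/-! For `‖q‖ < R` pick an isometric embedding `φ : ℂ → ℍ` whose image commutes with `q`
(the slice through `q`). Then `f (q φ(e^{iu})) = ∑ q^k φ(e^{iku}) c_k`, and since the `k`-th
Fourier coefficient of the de la Vallée Poussin kernel `K_n(u) = (2 cos (u/2))^{2n}` is
`2π C(2n, n-k)`, integrating against `K_n` turns this series into `2π C(2n, n) P_n(q)`.
So `P_n(q) - f(q)` is a `K_n`-average of `f (q φ(e^{iu})) - f(q)`, which is at most
`(2R√n |sin(u/2)| + 1) ω₁(f; 1/√n)` because the closed ball is convex; the `|sin(u/2)|`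
moment of `K_n` is `O(C(2n, n)/√n)` by `4^n ≤ 2√n C(2n, n)`. Continuity extends the bound to
the closed ball, and `ω₁(f; δ) → 0` by uniform continuity on the compact ball. -/

open Quaternion Real Filter Topology MeasureTheory

section ModulusOfContinuity

variable {f : ℍ → ℍ} {K : Set ℍ}

lemma omega1_nonneg (δ : ℝ) : 0 ≤ omega1 f K δ :=
  Real.sSup_nonneg <| by rintro _ ⟨u, -, v, -, -, rfl⟩; exact norm_nonneg _

lemma norm_sub_le_omega1 (hK : IsCompact K) (hf : ContinuousOn f K) {δ : ℝ} {u v : ℍ}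
    (hu : u ∈ K) (hv : v ∈ K) (huv : ‖u - v‖ ≤ δ) : ‖f u - f v‖ ≤ omega1 f K δ := by
  obtain ⟨M, hM⟩ := hK.exists_bound_of_continuousOn hf
  refine le_csSup ⟨2 * M, ?_⟩ ⟨u, hu, v, hv, huv, rfl⟩
  rintro _ ⟨x, hx, y, hy, -, rfl⟩
  linarith [norm_sub_le (f x) (f y), hM x hx, hM y hy]

lemma norm_sub_le_nat_mul_omega1 (hK : IsCompact K) (hKc : Convex ℝ K) (hf : ContinuousOn f K)
    {δ : ℝ} {u v : ℍ} (hu : u ∈ K) (hv : v ∈ K) (m : ℕ) (huv : ‖u - v‖ ≤ m * δ) :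
    ‖f u - f v‖ ≤ m * omega1 f K δ := by
  rcases m.eq_zero_or_pos with rfl | hm
  · obtain rfl : u = v := by simpa [sub_eq_zero] using huv
    simp
  -- Cut the segment `[u, v]` into `m` pieces of length at most `δ`.
  set x : ℕ → ℍ := fun j => AffineMap.lineMap u v ((j : ℝ) / m)
  have hm' : (m : ℝ) ≠ 0 := by positivity
  have hxK : ∀ j ≤ m, x j ∈ K := fun j hj =>
    hKc.lineMap_mem hu hv ⟨by positivity, div_le_one_of_le₀ (by exact_mod_cast hj) (by positivity)⟩
  have hstep : ∀ j, x j - x (j + 1) = (1 / m : ℝ) • (u - v) := fun j => by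
    simp only [x, AffineMap.lineMap_apply_module]
    field_simp
    push_cast
    module
  calc ‖f u - f v‖ = ‖∑ j ∈ Finset.range m, (f (x j) - f (x (j + 1)))‖ := by
        rw [Finset.sum_range_sub' (fun j => f (x j))]
        simp [x, hm']
    _ ≤ ∑ j ∈ Finset.range m, ‖f (x j) - f (x (j + 1))‖ := norm_sum_le _ _
    _ ≤ ∑ _j ∈ Finset.range m, omega1 f K δ := by
        refine Finset.sum_le_sum fun j hj => norm_sub_le_omega1 hK hf
          (hxK j (Finset.mem_range.1 hj).le) (hxK (j + 1) (Finset.mem_range.1 hj)) ?_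
        rw [hstep, norm_smul, Real.norm_of_nonneg (by positivity), one_div,
          inv_mul_le_iff₀ (by positivity)]
        exact huv
    _ = m * omega1 f K δ := by simp

lemma norm_sub_le_omega1_mul (hK : IsCompact K) (hKc : Convex ℝ K) (hf : ContinuousOn f K)
    {δ : ℝ} (hδ : 0 < δ) {u v : ℍ} (hu : u ∈ K) (hv : v ∈ K) :
    ‖f u - f v‖ ≤ (‖u - v‖ / δ + 1) * omega1 f K δ := by
  have hceil := Nat.ceil_lt_add_one (div_nonneg (norm_nonneg (u - v)) hδ.le)
  calc ‖f u - f v‖ ≤ ⌈‖u - v‖ / δ⌉₊ * omega1 f K δ :=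
        norm_sub_le_nat_mul_omega1 hK hKc hf hu hv _ <| by
          rw [← div_le_iff₀ hδ]; exact Nat.le_ceil _
    _ ≤ (‖u - v‖ / δ + 1) * omega1 f K δ := by gcongr; exact omega1_nonneg δ

lemma tendsto_omega1_zero (hK : IsCompact K) (hf : ContinuousOn f K) :
    Tendsto (omega1 f K) (𝓝[>] 0) (𝓝 0) := by
  rw [Metric.tendsto_nhdsWithin_nhds]
  intro ε hε
  obtain ⟨δ, hδ, hfδ⟩ := Metric.uniformContinuousOn_iff.1
    (hK.uniformContinuousOn_of_continuous hf) (ε / 2) (half_pos hε)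
  refine ⟨δ, hδ, fun t ht htδ => ?_⟩
  rw [Real.dist_eq, sub_zero, abs_of_nonneg (omega1_nonneg t)]
  rw [Real.dist_eq, sub_zero, abs_of_pos ht] at htδ
  refine (Real.sSup_le ?_ (half_pos hε).le).trans_lt (half_lt_self hε)
  rintro _ ⟨u, hu, v, hv, huv, rfl⟩
  rw [← dist_eq_norm]
  exact (hfδ u hu v hv (by rw [dist_eq_norm]; linarith)).le

end ModulusOfContinuity

section Kernel

open Complex in
lemma integral_exp_int_mul_mul_I (m : ℤ) :
    ∫ u in -π..π, exp (m * u * I) = if m = 0 then ((2 * π : ℝ) : ℂ) else 0 := by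
  split_ifs with hm
  · simp [hm]; ring
  have hmI : (m : ℂ) * I ≠ 0 := by simp [hm]
  simp_rw [mul_right_comm _ _ I]
  rw [integral_exp_mul_complex hmI, div_eq_zero_iff, sub_eq_zero, Complex.exp_eq_exp_iff_exists_int]
  exact Or.inl ⟨m, by push_cast; ring⟩

def vallePoussinKernel (n : ℕ) (u : ℝ) : ℝ := (2 * Real.cos (u / 2)) ^ (2 * n)

variable (n : ℕ)

lemma vallePoussinKernel_nonneg (u : ℝ) : 0 ≤ vallePoussinKernel n u :=
  (even_two_mul n).pow_nonneg _

lemma vallePoussinKernel_le (u : ℝ) : vallePoussinKernel n u ≤ 4 ^ n := by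
  rw [vallePoussinKernel, ← (even_two_mul n).pow_abs, pow_mul, abs_mul, abs_two]
  gcongr
  nlinarith [abs_nonneg (Real.cos (u / 2)), Real.abs_cos_le_one (u / 2)]

lemma continuous_vallePoussinKernel : Continuous (vallePoussinKernel n) := by
  unfold vallePoussinKernel; fun_prop

open Complex in
lemma ofReal_vallePoussinKernel (u : ℝ) :
    (vallePoussinKernel n u : ℂ) =
      ∑ j ∈ Finset.range (2 * n + 1), ((2 * n).choose j : ℂ) * exp (((j : ℤ) - n : ℤ) * u * I) := by
  have htwo_cos : 2 * Complex.cos (u / 2) = exp (u / 2 * I) + exp (-(u / 2 * I)) := by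
    rw [Complex.cos]; ring_nf
  rw [vallePoussinKernel]
  push_cast
  rw [htwo_cos, add_pow]
  refine Finset.sum_congr rfl fun j hj => ?_
  have hj : j ≤ 2 * n := Nat.lt_succ_iff.1 (Finset.mem_range.1 hj)
  rw [← Complex.exp_nat_mul, ← Complex.exp_nat_mul, ← Complex.exp_add, Nat.cast_sub hj]
  push_cast
  ring_nf

open Complex in
lemma integral_vallePoussinKernel_mul_exp_pow (k : ℕ) :
    ∫ u in -π..π, (vallePoussinKernel n u : ℂ) * exp (u * I) ^ k =
      if k ≤ n then ((2 * π * (2 * n).choose (n - k) : ℝ) : ℂ) else 0 := by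
  have hexpand : ∀ u : ℝ, (vallePoussinKernel n u : ℂ) * exp (u * I) ^ k =
      ∑ j ∈ Finset.range (2 * n + 1),
        ((2 * n).choose j : ℂ) * exp (((j + k : ℕ) - n : ℤ) * u * I) := fun u => by
    rw [ofReal_vallePoussinKernel, Finset.sum_mul]
    refine Finset.sum_congr rfl fun j _ => ?_
    rw [← Complex.exp_nat_mul, mul_assoc, ← Complex.exp_add]
    push_cast
    ring_nf
  simp_rw [hexpand]
  rw [intervalIntegral.integral_finsetSum fun j _ => by
    exact (Continuous.intervalIntegrable (by fun_prop) _ _)]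
  simp_rw [intervalIntegral.integral_const_mul, integral_exp_int_mul_mul_I, sub_eq_zero,
    Nat.cast_inj, mul_ite, mul_zero]
  split_ifs with hk
  · rw [Finset.sum_eq_single (n - k)]
    · rw [if_pos (by omega)]; push_cast; ring
    · intro j _ hj; rw [if_neg (by omega)]
    · intro h; exact absurd (Finset.mem_range.2 (by omega)) h
  · exact Finset.sum_eq_zero fun j _ => if_neg (by omega)

lemma integral_vallePoussinKernel :
    ∫ u in -π..π, vallePoussinKernel n u = 2 * π * n.centralBinom := by
  have h := integral_vallePoussinKernel_mul_exp_pow n 0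
  simp only [pow_zero, mul_one, zero_le, if_true, Nat.sub_zero,
    intervalIntegral.integral_ofReal] at h
  rw [Nat.centralBinom_eq_two_mul_choose]
  exact_mod_cast h

lemma integral_abs_sin_mul_vallePoussinKernel :
    ∫ u in -π..π, |Real.sin (u / 2)| * vallePoussinKernel n u = 4 ^ (n + 1) / (2 * n + 1) := by
  set g : ℝ → ℝ := fun u => |Real.sin (u / 2)| * vallePoussinKernel n u
  have hg : Continuous g := by unfold g vallePoussinKernel; fun_prop
  have heven : ∫ u in -π..0, g u = ∫ u in 0..π, g u := by
    rw [← neg_zero, ← intervalIntegral.integral_comp_neg, neg_zero]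
    simp [g, vallePoussinKernel, neg_div]
  have hderiv : ∀ u, HasDerivAt
      (fun u => -(2 * 4 ^ n / (2 * n + 1)) * Real.cos (u / 2) ^ (2 * n + 1))
      (4 ^ n * (Real.sin (u / 2) * Real.cos (u / 2) ^ (2 * n))) u := fun u => by
    refine ((((hasDerivAt_id' u).div_const 2).cos.pow (2 * n + 1)).const_mul
      (-(2 * 4 ^ n / (2 * n + 1) : ℝ))).congr_deriv ?_
    rw [Nat.add_sub_cancel]
    push_cast
    field_simp
  have hhalf : ∫ u in 0..π, g u = 2 * 4 ^ n / (2 * n + 1) := by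
    rw [intervalIntegral.integral_congr
      (g := fun u => 4 ^ n * (Real.sin (u / 2) * Real.cos (u / 2) ^ (2 * n)))]
    · rw [intervalIntegral.integral_eq_sub_of_hasDerivAt (fun u _ => hderiv u)
        (Continuous.intervalIntegrable (by fun_prop) _ _)]
      simp [Real.cos_pi_div_two]
    · intro u hu
      rw [Set.uIcc_of_le Real.pi_pos.le] at hu
      simp only [g, vallePoussinKernel, pow_mul, mul_pow]
      rw [abs_of_nonneg (Real.sin_nonneg_of_nonneg_of_le_pi (by linarith [hu.1])
        (by linarith [hu.2, Real.pi_pos]))]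
      norm_num; ring
  rw [← intervalIntegral.integral_add_adjacent_intervals (b := 0)
    (hg.intervalIntegrable _ _) (hg.intervalIntegrable _ _), heven, hhalf]
  ring

lemma integral_vallePoussinKernel_mul_abs_sin_add (a b : ℝ) :
    ∫ u in -π..π, vallePoussinKernel n u * (a * |Real.sin (u / 2)| + b) =
      a * (4 ^ (n + 1) / (2 * n + 1)) + b * (2 * π * n.centralBinom) := by
  have hsplit : ∀ u, vallePoussinKernel n u * (a * |Real.sin (u / 2)| + b) =
      a * (|Real.sin (u / 2)| * vallePoussinKernel n u) + b * vallePoussinKernel n u :=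
    fun u => by ring
  have := continuous_vallePoussinKernel n
  simp_rw [hsplit]
  rw [intervalIntegral.integral_add (Continuous.intervalIntegrable (by fun_prop) _ _)
      (Continuous.intervalIntegrable (by fun_prop) _ _), intervalIntegral.integral_const_mul,
    intervalIntegral.integral_const_mul, integral_abs_sin_mul_vallePoussinKernel,
    integral_vallePoussinKernel]

end Kernel

lemma Nat.sixteen_pow_le_four_mul_self_mul_centralBinom_sq {n : ℕ} (hn : 1 ≤ n) :
    16 ^ n ≤ 4 * n * n.centralBinom ^ 2 := by
  induction n, hn using Nat.le_induction with
  | base => decide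
  | succ n hn ih =>
    have hrec := Nat.succ_mul_centralBinom_succ n
    refine Nat.le_of_mul_le_mul_left (?_ : (n + 1) * _ ≤ (n + 1) * _) n.succ_pos
    calc (n + 1) * 16 ^ (n + 1) = 16 * (n + 1) * 16 ^ n := by ring
      _ ≤ 16 * (n + 1) * (4 * n * n.centralBinom ^ 2) := by gcongr
      _ ≤ 16 * (2 * n + 1) ^ 2 * n.centralBinom ^ 2 := by
          rw [← mul_assoc, mul_assoc 16]; gcongr; nlinarith
      _ = (n + 1) * (4 * (n + 1) * (n + 1).centralBinom ^ 2) := by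
          rw [show (n + 1) * (4 * (n + 1) * (n + 1).centralBinom ^ 2) =
            4 * ((n + 1) * (n + 1).centralBinom) ^ 2 by ring, hrec]
          ring

lemma Nat.four_pow_le_two_mul_sqrt_mul_centralBinom {n : ℕ} (hn : 1 ≤ n) :
    (4 : ℝ) ^ n ≤ 2 * √n * n.centralBinom := by
  refine (pow_le_pow_iff_left₀ (by positivity) (by positivity) two_ne_zero).1 ?_
  rw [← pow_mul, mul_comm n, pow_mul, mul_pow, mul_pow, Real.sq_sqrt n.cast_nonneg]
  have h := Nat.sixteen_pow_le_four_mul_self_mul_centralBinom_sq hn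
  norm_num
  exact_mod_cast h

lemma sqrt_mul_four_pow_succ_div_le_two_pi_mul_centralBinom {n : ℕ} (hn : 1 ≤ n) :
    √n * 4 ^ (n + 1) / (2 * n + 1) ≤ 2 * π * n.centralBinom := by
  have hsq : √n * √n = n := Real.mul_self_sqrt n.cast_nonneg
  have hC : (0 : ℝ) < n.centralBinom := by exact_mod_cast n.centralBinom_pos
  rw [div_le_iff₀ (by positivity)]
  calc √n * 4 ^ (n + 1) ≤ √n * 4 * (2 * √n * n.centralBinom) := by
        rw [pow_succ, mul_comm _ (4 : ℝ), ← mul_assoc]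
        gcongr; exact Nat.four_pow_le_two_mul_sqrt_mul_centralBinom hn
    _ = 4 * n.centralBinom * (2 * n) := by linear_combination (8 * (n.centralBinom : ℝ)) * hsq
    _ ≤ 2 * π * n.centralBinom * (2 * n + 1) := by
        gcongr
        · linarith [Real.pi_gt_three]
        · linarith

lemma Quaternion.exists_unit_imaginary_commute (q : ℍ) :
    ∃ I : ℍ, I.re = 0 ∧ normSq I = 1 ∧ Commute q I := by
  by_cases him : q.im = 0
  · refine ⟨(Complex.I : ℂ), by simp, by simp [normSq_def'], ?_⟩
    rw [← q.re_add_im, him, add_zero]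
    exact Quaternion.coe_commute _ _
  · have hpos : 0 < ‖q.im‖ := norm_pos_iff.2 him
    refine ⟨‖q.im‖⁻¹ • q.im, by simp, ?_, ?_⟩
    · rw [normSq_smul, normSq_eq_norm_mul_self, ← sq, inv_pow, inv_mul_cancel₀ (by positivity)]
    · refine Commute.smul_right ?_ _
      nth_rewrite 1 [← q.re_add_im]
      exact (Quaternion.coe_commute _ _).add_left (Commute.refl _)

lemma Quaternion.exists_isometric_algHom_complex_commute (q : ℍ) :
    ∃ φ : ℂ →ₐ[ℝ] ℍ, (∀ z, ‖φ z‖ = ‖z‖) ∧ ∀ z, Commute q (φ z) := by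
  obtain ⟨I, hre, hnorm, hqI⟩ := q.exists_unit_imaginary_commute
  have hII : I * I = -1 := by
    rw [← sq, sq_eq_neg_normSq.2 hre, hnorm, coe_one]
  refine ⟨Complex.liftAux I hII, fun z => ?_, fun z => ?_⟩
  · rw [← mul_self_inj (norm_nonneg _) (norm_nonneg z), ← normSq_eq_norm_mul_self,
      ← sq, ← Complex.normSq_eq_norm_sq, Complex.liftAux_apply]
    rw [normSq_def', hre] at hnorm
    simp [normSq_def', Complex.normSq_apply, hre]
    linear_combination z.im ^ 2 * hnorm
  · rw [Complex.liftAux_apply]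
    exact (Algebra.commute_algebraMap_right _ q).add_right (hqI.smul_right _)

lemma summable_pow_mul_norm_of_bddAbove {E : Type*} [SeminormedAddCommGroup E] {c : ℕ → E}
    {r ρ : ℝ} (hρ : 0 ≤ ρ) (hρr : ρ < r) (hc : BddAbove (Set.range fun k => r ^ k * ‖c k‖)) :
    Summable fun k => ρ ^ k * ‖c k‖ := by
  obtain ⟨M, hM⟩ := hc
  have hr : 0 < r := hρ.trans_lt hρr
  refine .of_nonneg_of_le (fun k => by positivity) (fun k => ?_)
    ((summable_geometric_of_lt_one (by positivity) ((div_lt_one hr).2 hρr)).mul_left M)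
  calc ρ ^ k * ‖c k‖ = (ρ / r) ^ k * (r ^ k * ‖c k‖) := by
        rw [div_pow]; field_simp
    _ ≤ M * (ρ / r) ^ k := by
        rw [mul_comm M]; exact mul_le_mul_of_nonneg_left (hM ⟨k, rfl⟩) (by positivity)

lemma summable_norm_pow_mul_of_hasSum {R : ℝ} {f : ℍ → ℍ} {c : ℕ → ℍ}
    (hc : ∀ p ∈ Metric.ball (0 : ℍ) R, HasSum (fun k => p ^ k * c k) (f p)) {q : ℍ}
    (hq : ‖q‖ < R) : Summable fun k => ‖q‖ ^ k * ‖c k‖ := by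
  obtain ⟨r, hqr, hrR⟩ := exists_between hq
  have hr : 0 < r := (norm_nonneg q).trans_lt hqr
  have hmem : (r : ℍ) ∈ Metric.ball (0 : ℍ) R := by
    rwa [mem_ball_zero_iff, norm_coe, Real.norm_of_nonneg hr.le]
  refine summable_pow_mul_norm_of_bddAbove (norm_nonneg q) hqr ?_
  obtain ⟨M, hM⟩ := (hc _ hmem).summable.tendsto_atTop_zero.norm.bddAbove_range
  refine ⟨M, ?_⟩
  rintro _ ⟨k, rfl⟩
  simpa [norm_mul, norm_pow, Real.norm_of_nonneg hr.le] using hM ⟨k, rfl⟩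

def vallePoussinMean (c : ℕ → ℍ) (n : ℕ) (q : ℍ) : ℍ :=
  ∑ l ∈ Finset.range (n + 1),
    ((n.factorial : ℝ) ^ 2 / (((n - l).factorial : ℝ) * ((n + l).factorial : ℝ))) • (q ^ l * c l)

lemma factorial_sq_div_eq_choose_div_centralBinom {n l : ℕ} (hl : l ≤ n) :
    (n.factorial : ℝ) ^ 2 / ((n - l).factorial * (n + l).factorial) =
      (2 * n).choose (n - l) / n.centralBinom := by
  rw [Nat.centralBinom_eq_two_mul_choose, Nat.cast_choose ℝ (by omega : n - l ≤ 2 * n),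
    Nat.cast_choose ℝ (by omega : n ≤ 2 * n), show 2 * n - (n - l) = n + l by omega,
    show 2 * n - n = n by omega]
  field_simp

section Representation

open Complex (exp I)

lemma integral_vallePoussinKernel_smul_mul_exp_pow_mul (φ : ℂ →ₐ[ℝ] ℍ) (b a : ℍ) (n k : ℕ) :
    ∫ u in -π..π, vallePoussinKernel n u • (b * φ (exp (u * I) ^ k) * a) =
      (if k ≤ n then 2 * π * (2 * n).choose (n - k) else 0 : ℝ) • (b * a) := by
  let L : ℂ →L[ℝ] ℍ := (LinearMap.mulLeftRight ℝ (b, a) ∘ₗ φ.toLinearMap).toContinuousLinearMap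
  have hL : ∀ z, L z = b * φ z * a := fun z => rfl
  have hcomm : ∀ u : ℝ, vallePoussinKernel n u • (b * φ (exp (u * I) ^ k) * a) =
      L ((vallePoussinKernel n u : ℂ) * exp (u * I) ^ k) := fun u => by
    rw [hL, ← Complex.real_smul (x := vallePoussinKernel n u), map_smul, mul_smul_comm,
      smul_mul_assoc]
  simp_rw [hcomm]
  rw [L.intervalIntegral_comp_comm (Continuous.intervalIntegrable (by
      have := continuous_vallePoussinKernel n; fun_prop) _ _),
    integral_vallePoussinKernel_mul_exp_pow, hL]
  split_ifs
  · rw [← Complex.coe_algebraMap, AlgHom.commutes, ← Algebra.commutes, mul_assoc,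
      ← Algebra.smul_def]
  · simp

variable {R : ℝ} {f : ℍ → ℍ} {c : ℕ → ℍ} {φ : ℂ →ₐ[ℝ] ℍ} {q : ℍ}

lemma norm_mul_exp (hφ : ∀ z, ‖φ z‖ = ‖z‖) (q : ℍ) (u : ℝ) : ‖q * φ (exp (u * I))‖ = ‖q‖ := by
  rw [norm_mul, hφ, Complex.norm_exp_ofReal_mul_I, mul_one]

lemma norm_mul_exp_sub_self (hφ : ∀ z, ‖φ z‖ = ‖z‖) (q : ℍ) (u : ℝ) :
    ‖q * φ (exp (u * I)) - q‖ = ‖q‖ * |2 * Real.sin (u / 2)| := by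
  rw [← mul_sub_one, ← map_one φ, ← map_sub, norm_mul, hφ, mul_comm (u : ℂ),
    Complex.norm_exp_I_mul_ofReal_sub_one, Real.norm_eq_abs]

lemma integral_vallePoussinKernel_smul_comp_mul_exp
    (hc : ∀ p ∈ Metric.ball (0 : ℍ) R, HasSum (fun k => p ^ k * c k) (f p))
    (hφ : ∀ z, ‖φ z‖ = ‖z‖) (hq : ∀ z, Commute q (φ z)) (hqR : ‖q‖ < R) (n : ℕ) :
    ∫ u in -π..π, vallePoussinKernel n u • f (q * φ (exp (u * I))) =
      (2 * π) • ∑ l ∈ Finset.range (n + 1), ((2 * n).choose (n - l) : ℝ) • (q ^ l * c l) := by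
  have hnorm_exp_pow : ∀ (u : ℝ) (k : ℕ), ‖φ (exp (u * I) ^ k)‖ = 1 := fun u k => by
    rw [hφ, norm_pow, Complex.norm_exp_ofReal_mul_I, one_pow]
  have hterms : HasSum
      (fun k => ∫ u in -π..π, vallePoussinKernel n u • (q ^ k * φ (exp (u * I) ^ k) * c k))
      (∫ u in -π..π, vallePoussinKernel n u • f (q * φ (exp (u * I)))) := by
    refine intervalIntegral.hasSum_integral_of_dominated_convergence
      (fun k _ => 4 ^ n * (‖q‖ ^ k * ‖c k‖)) (fun k => Continuous.aestronglyMeasurable ?_)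
      (fun k => ae_of_all _ fun u _ => ?_)
      (ae_of_all _ fun _ _ => (summable_norm_pow_mul_of_hasSum hc hqR).mul_left _)
      intervalIntegrable_const (ae_of_all _ fun u _ => ?_)
    · have := continuous_vallePoussinKernel n
      have : Continuous φ := φ.toLinearMap.continuous_of_finiteDimensional
      fun_prop
    · rw [norm_smul, norm_mul, norm_mul, norm_pow, hnorm_exp_pow, mul_one,
        Real.norm_of_nonneg (vallePoussinKernel_nonneg n u)]
      gcongr
      exact vallePoussinKernel_le n u
    · refine ((hc _ (by rwa [mem_ball_zero_iff, norm_mul_exp hφ])).const_smul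
        (vallePoussinKernel n u)).congr_fun fun k => ?_
      rw [(hq _).mul_pow, map_pow]
  simp_rw [integral_vallePoussinKernel_smul_mul_exp_pow_mul] at hterms
  refine hterms.unique ?_
  convert hasSum_sum_of_ne_finset_zero (L := .unconditional ℕ) (s := Finset.range (n + 1))
    fun k hk => ?_ using 1
  · rw [Finset.smul_sum]
    refine Finset.sum_congr rfl fun l hl => ?_
    rw [if_pos (Nat.lt_succ_iff.1 (Finset.mem_range.1 hl)), smul_smul]
  · rw [if_neg (by simpa using hk), zero_smul]

lemma vallePoussinMean_sub_eq_integral (hf : ContinuousOn f (Metric.ball 0 R))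
    (hc : ∀ p ∈ Metric.ball (0 : ℍ) R, HasSum (fun k => p ^ k * c k) (f p))
    (hφ : ∀ z, ‖φ z‖ = ‖z‖) (hq : ∀ z, Commute q (φ z)) (hqR : ‖q‖ < R) (n : ℕ) :
    vallePoussinMean c n q - f q = (2 * π * n.centralBinom)⁻¹ •
      ∫ u in -π..π, vallePoussinKernel n u • (f (q * φ (exp (u * I))) - f q) := by
  have hC : (2 * π * n.centralBinom : ℝ) ≠ 0 := by
    have := n.centralBinom_pos; positivity
  have hmean : vallePoussinMean c n q = (2 * π * n.centralBinom)⁻¹ •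
      ∫ u in -π..π, vallePoussinKernel n u • f (q * φ (exp (u * I))) := by
    rw [integral_vallePoussinKernel_smul_comp_mul_exp hc hφ hq hqR, smul_smul, Finset.smul_sum]
    refine Finset.sum_congr rfl fun l hl => ?_
    rw [factorial_sq_div_eq_choose_div_centralBinom (Nat.lt_succ_iff.1 (Finset.mem_range.1 hl)),
      smul_smul]
    congr 1
    field_simp
  have hcont : Continuous fun u : ℝ => vallePoussinKernel n u • f (q * φ (exp (u * I))) := by
    have : Continuous φ := φ.toLinearMap.continuous_of_finiteDimensional
    exact (continuous_vallePoussinKernel n).smul (hf.comp_continuous (by fun_prop) fun u => by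
      rwa [mem_ball_zero_iff, norm_mul_exp hφ])
  simp_rw [smul_sub]
  rw [intervalIntegral.integral_sub (g := fun u => vallePoussinKernel n u • f q)
      (hcont.intervalIntegrable _ _)
      (((continuous_vallePoussinKernel n).smul continuous_const).intervalIntegrable _ _),
    intervalIntegral.integral_smul_const, integral_vallePoussinKernel, smul_sub, ← hmean,
    inv_smul_smul₀ hC]

lemma norm_comp_mul_exp_sub_le (hf : ContinuousOn f (Metric.closedBall 0 R))
    (hφ : ∀ z, ‖φ z‖ = ‖z‖) (hq : ‖q‖ ≤ R) {δ : ℝ} (hδ : 0 < δ) (u : ℝ) :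
    ‖f (q * φ (exp (u * I))) - f q‖ ≤
      2 * R / δ * omega1 f (Metric.closedBall 0 R) δ * |Real.sin (u / 2)| +
        omega1 f (Metric.closedBall 0 R) δ := by
  refine (norm_sub_le_omega1_mul (isCompact_closedBall 0 R) (convex_closedBall 0 R) hf hδ
    (by rwa [mem_closedBall_zero_iff, norm_mul_exp hφ]) (mem_closedBall_zero_iff.2 hq)).trans ?_
  set ω := omega1 f (Metric.closedBall 0 R) δ
  have hω : 0 ≤ ω := omega1_nonneg δ
  rw [norm_mul_exp_sub_self hφ, abs_mul, abs_two, add_mul, one_mul, add_le_add_iff_right,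
    show 2 * R / δ * ω * |Real.sin (u / 2)| = 2 * R * |Real.sin (u / 2)| / δ * ω by ring]
  gcongr ?_ / _ * _
  nlinarith [abs_nonneg (Real.sin (u / 2))]

theorem norm_vallePoussinMean_sub_le_of_norm_lt (hf : ContinuousOn f (Metric.closedBall 0 R))
    (hc : ∀ p ∈ Metric.ball (0 : ℍ) R, HasSum (fun k => p ^ k * c k) (f p))
    {n : ℕ} (hn : 1 ≤ n) (hq : ‖q‖ < R) :
    ‖vallePoussinMean c n q - f q‖ ≤
      3 * (R + 1) * omega1 f (Metric.closedBall 0 R) (1 / √n) := by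
  obtain ⟨φ, hφ, hqφ⟩ := q.exists_isometric_algHom_complex_commute
  set ω := omega1 f (Metric.closedBall 0 R) (1 / √n)
  set C := 2 * π * n.centralBinom
  have hR : 0 ≤ R := (norm_nonneg q).trans hq.le
  have hω : 0 ≤ ω := omega1_nonneg _
  have hC : 0 < C := by have := n.centralBinom_pos; positivity
  have hsqrt : 0 < √n := Real.sqrt_pos.2 (by exact_mod_cast hn)
  calc ‖vallePoussinMean c n q - f q‖
      = C⁻¹ * ‖∫ u in -π..π, vallePoussinKernel n u • (f (q * φ (exp (u * I))) - f q)‖ := by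
        rw [vallePoussinMean_sub_eq_integral (hf.mono Metric.ball_subset_closedBall) hc hφ hqφ hq,
          norm_smul, Real.norm_of_nonneg (inv_pos.2 hC).le]
    _ ≤ C⁻¹ * ∫ u in -π..π,
          vallePoussinKernel n u * (2 * R / (1 / √n) * ω * |Real.sin (u / 2)| + ω) := by
        gcongr
        refine intervalIntegral.norm_integral_le_of_norm_le (by linarith [Real.pi_pos])
          (ae_of_all _ fun u _ => ?_) (Continuous.intervalIntegrable ?_ _ _)
        · rw [norm_smul, Real.norm_of_nonneg (vallePoussinKernel_nonneg n u)]
          exact mul_le_mul_of_nonneg_left (norm_comp_mul_exp_sub_le hf hφ hq.le (by positivity) u)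
            (vallePoussinKernel_nonneg n u)
        · have := continuous_vallePoussinKernel n
          fun_prop
    _ = C⁻¹ * (2 * R * ω * (√n * 4 ^ (n + 1) / (2 * n + 1)) + ω * C) := by
        rw [integral_vallePoussinKernel_mul_abs_sin_add, div_div_eq_mul_div, div_one]
        ring
    _ ≤ C⁻¹ * (2 * R * ω * C + ω * C) := by
        gcongr
        exact sqrt_mul_four_pow_succ_div_le_two_pi_mul_centralBinom hn
    _ = (2 * R + 1) * ω := by field_simp
    _ ≤ 3 * (R + 1) * ω := mul_le_mul_of_nonneg_right (by linarith) hω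

end Representation

theorem norm_vallePoussinMean_sub_le {R : ℝ} {f : ℍ → ℍ} {c : ℕ → ℍ} (hR : 0 < R)
    (hf : ContinuousOn f (Metric.closedBall 0 R))
    (hc : ∀ p ∈ Metric.ball (0 : ℍ) R, HasSum (fun k => p ^ k * c k) (f p))
    {n : ℕ} (hn : 1 ≤ n) {q : ℍ} (hq : q ∈ Metric.closedBall (0 : ℍ) R) :
    ‖vallePoussinMean c n q - f q‖ ≤
      3 * (R + 1) * omega1 f (Metric.closedBall 0 R) (1 / √n) := by
  have hmean : Continuous (vallePoussinMean c n) := by unfold vallePoussinMean; fun_prop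
  refine ContinuousWithinAt.closure_le (by rwa [closure_ball 0 hR.ne'])
    ((((hmean.continuousOn.sub hf).norm) q hq).mono Metric.ball_subset_closedBall)
    continuousWithinAt_const fun p hp => ?_
  exact norm_vallePoussinMean_sub_le_of_norm_lt hf hc hn (mem_ball_zero_iff.1 hp)

theorem quantitative_approximation_on_compact_balls_general
    (R : ℝ) (hR : 0 < R)
    (f : Quaternion ℝ → Quaternion ℝ)
    (hfcont : ContinuousOn f (Metric.closedBall (0 : Quaternion ℝ) R))
    (c : ℕ → Quaternion ℝ)
    (hc : ∀ q ∈ Metric.ball (0 : Quaternion ℝ) R, HasSum (fun k => q ^ k * c k) (f q)) :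
    (∀ n : ℕ, 1 ≤ n → ∀ q ∈ Metric.closedBall (0 : Quaternion ℝ) R,
      ‖(∑ l ∈ Finset.range (n + 1),
            ((n.factorial : ℝ) ^ 2 / (((n - l).factorial : ℝ) * ((n + l).factorial : ℝ)))
              • (q ^ l * c l))
          - f q‖
        ≤ 3 * (R + 1) * omega1 f (Metric.closedBall (0 : Quaternion ℝ) R)
            (1 / Real.sqrt n)) ∧
    ∀ ε : ℝ, 0 < ε → ∃ (n : ℕ) (a : ℕ → Quaternion ℝ),
      ∀ q ∈ Metric.closedBall (0 : Quaternion ℝ) R,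
        ‖f q - ∑ k ∈ Finset.range (n + 1), q ^ k * a k‖ < ε := by
  refine ⟨fun n hn q hq => norm_vallePoussinMean_sub_le hR hfcont hc hn hq, fun ε hε => ?_⟩
  have hδ : Tendsto (fun n : ℕ => 1 / √n) atTop (𝓝[>] 0) := by
    simp_rw [one_div]
    exact tendsto_inv_atTop_nhdsGT_zero.comp
      (Real.tendsto_sqrt_atTop.comp tendsto_natCast_atTop_atTop)
  have hbound : Tendsto (fun n : ℕ => 3 * (R + 1) * omega1 f (Metric.closedBall 0 R) (1 / √n))
      atTop (𝓝 0) := by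
    simpa using ((tendsto_omega1_zero (isCompact_closedBall 0 R) hfcont).comp hδ).const_mul
      (3 * (R + 1))
  obtain ⟨n, hnε, hn⟩ := ((hbound.eventually (gt_mem_nhds hε)).and (eventually_ge_atTop 1)).exists
  refine ⟨n, fun l => ((n.factorial : ℝ) ^ 2 /
    (((n - l).factorial : ℝ) * ((n + l).factorial : ℝ))) • c l, fun q hq => ?_⟩
  rw [norm_sub_rev]
  simp_rw [mul_smul_comm]
  exact (norm_vallePoussinMean_sub_le hR hfcont hc hn hq).trans_lt hnε

/-- **Quantitative approximation on compact balls.** Let `R > 0`, `K` the closed ball of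
radius `R` centered at `0` in `ℍ`, and `f : K → ℍ` continuous on `K`, slice regular on
the open ball, with power series expansion `f(q) = ∑_{k=0}^∞ q^k c_k` there. With
`Pₙ(q) = ∑_{l=0}^n q^l c_l (n!)² / ((n−l)!(n+l)!)` one has, for all `q ∈ K` and `n ≥ 1`,
`‖Pₙ(q) − f(q)‖ ≤ 3(R+1) ω₁(f; 1/√n)`; in particular for every `ε > 0` there is a
polynomial `P` with `‖f(q) − P(q)‖ < ε` on `K`. -/
theorem quantitative_approximation_on_compact_balls
    (R : ℝ) (hR : 0 < R)
    (f : Quaternion ℝ → Quaternion ℝ)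
    (hfcont : ContinuousOn f (Metric.closedBall (0 : Quaternion ℝ) R))
    (hfreg : SliceRegularOn f (Metric.ball (0 : Quaternion ℝ) R))
    (c : ℕ → Quaternion ℝ)
    (hc : ∀ q ∈ Metric.ball (0 : Quaternion ℝ) R, HasSum (fun k => q ^ k * c k) (f q)) :
    (∀ n : ℕ, 1 ≤ n → ∀ q ∈ Metric.closedBall (0 : Quaternion ℝ) R,
      ‖(∑ l ∈ Finset.range (n + 1),
            ((n.factorial : ℝ) ^ 2 / (((n - l).factorial : ℝ) * ((n + l).factorial : ℝ)))
              • (q ^ l * c l))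
          - f q‖
        ≤ 3 * (R + 1) * omega1 f (Metric.closedBall (0 : Quaternion ℝ) R)
            (1 / Real.sqrt n)) ∧
    ∀ ε : ℝ, 0 < ε → ∃ (n : ℕ) (a : ℕ → Quaternion ℝ),
      ∀ q ∈ Metric.closedBall (0 : Quaternion ℝ) R,
        ‖f q - ∑ k ∈ Finset.range (n + 1), q ^ k * a k‖ < ε :=
  quantitative_approximation_on_compact_balls_general R hR f hfcont c hc
end
end
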